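/- arXiv:math/0303192 — 6 statements merged into one kernel-verified Lean document; each statement's English description precedes it below -/
import Mathlib

section
/- For symmetric polynomials in n variables over ℂ, the following are equivalent: (1) the elementary symmetric polynomials e_{2j+1} vanish for all j with 0 ≤ j ≤ (n-1)/2; (2) the power sums p_{2j+1} = Σᵢ xᵢ^{2j+1} vanish for all j with 0 ≤ j ≤ (n-1)/2. -/
/-- Value of the `k`-th elementary symmetric polynomial at a point `x ∈ ℂⁿ`. -/
noncomputable def esymmVal {n : ℕ} (x : Fin n → ℂ) (k : ℕ) : ℂ :=
  ∑ s ∈ Finset.powersetCard k (Finset.univ : Finset (Fin n)), ∏ i ∈ s, x i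

/-- Value of the `k`-th power sum at a point `x ∈ ℂⁿ`. -/
noncomputable def psumVal {n : ℕ} (x : Fin n → ℂ) (k : ℕ) : ℂ :=
  ∑ i, x i ^ k

lemma esymmVal_eq_eval {n : ℕ} (x : Fin n → ℂ) (k : ℕ) :
    esymmVal x k = MvPolynomial.eval x (MvPolynomial.esymm (Fin n) ℂ k) := by
  simp [esymmVal, MvPolynomial.esymm, MvPolynomial.eval_prod]

lemma psumVal_eq_eval {n : ℕ} (x : Fin n → ℂ) (k : ℕ) :
    psumVal x k = MvPolynomial.eval x (MvPolynomial.psum (Fin n) ℂ k) := by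
  simp [psumVal, MvPolynomial.psum]

lemma esymmVal_zero {n : ℕ} (x : Fin n → ℂ) : esymmVal x 0 = 1 := by
  simp [esymmVal]

lemma newtonVal {n : ℕ} (x : Fin n → ℂ) (k : ℕ) :
    (k : ℂ) * esymmVal x k = (-1) ^ (k + 1) *
      ∑ a ∈ Finset.HasAntidiagonal.antidiagonal k with a.1 < k,
        (-1) ^ a.1 * esymmVal x a.1 * psumVal x a.2 := by
  have h := congrArg (MvPolynomial.eval x) (MvPolynomial.mul_esymm_eq_sum (Fin n) ℂ k)
  simpa [esymmVal_eq_eval, psumVal_eq_eval] using h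

/-- At any point of `ℂⁿ`, the odd elementary symmetric polynomials `e_{2j+1}`,
`0 ≤ j ≤ (n-1)/2`, all vanish iff the odd power sums `p_{2j+1}`, `0 ≤ j ≤ (n-1)/2`,
all vanish. -/
theorem odd_esymm_vanish_iff_odd_psum_vanish (n : ℕ) (x : Fin n → ℂ) :
    (∀ j : ℕ, j ≤ (n - 1) / 2 → esymmVal x (2 * j + 1) = 0) ↔
    (∀ j : ℕ, j ≤ (n - 1) / 2 → psumVal x (2 * j + 1) = 0) := by
  set M := (n - 1) / 2 with hM
  constructor
  · intro h j
    induction j using Nat.strong_induction_on with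
    | _ j ih =>
      intro hj
      have hN := newtonVal x (2 * j + 1)
      have hpow : ((-1 : ℂ)) ^ (2 * j + 1 + 1) = 1 := by
        have : Even (2 * j + 1 + 1) := ⟨j + 1, by ring⟩
        exact this.neg_one_pow
      rw [hpow, one_mul, h j hj] at hN
      have hsum : ∑ a ∈ Finset.HasAntidiagonal.antidiagonal (2 * j + 1) with a.1 < 2 * j + 1,
          (-1 : ℂ) ^ a.1 * esymmVal x a.1 * psumVal x a.2 = psumVal x (2 * j + 1) := by
        rw [Finset.sum_eq_single (0, 2 * j + 1)]
        · simp [esymmVal_zero]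
        · rintro ⟨b1, b2⟩ hb hne
          simp only [Finset.mem_filter, Finset.HasAntidiagonal.mem_antidiagonal] at hb
          obtain ⟨hab, hlt⟩ := hb
          have hb1ne : b1 ≠ 0 := by
            rintro rfl
            exact hne (by simp_all)
          rcases Nat.even_or_odd b1 with he | ho
          · -- b1 even nonzero, b2 odd and smaller
            obtain ⟨c, hc⟩ : Odd b2 := by
              rcases he with ⟨t, ht⟩
              exact ⟨j - t, by omega⟩
            have hc2 : c < j := by omega
            have : psumVal x b2 = 0 := by
              have := ih c hc2 (le_trans (le_of_lt hc2) hj)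
              rwa [show 2 * c + 1 = b2 by omega] at this
            simp [this]
          · obtain ⟨c, hc⟩ := ho
            have : esymmVal x b1 = 0 := by
              have := h c (by omega)
              rwa [show 2 * c + 1 = b1 by omega] at this
            simp [this]
        · intro hmem
          exact absurd (by simp) hmem
      rw [hsum] at hN
      simp at hN
      exact hN.symm
  · intro h j
    induction j using Nat.strong_induction_on with
    | _ j ih =>
      intro hj
      have hN := newtonVal x (2 * j + 1)
      have hsum : ∑ a ∈ Finset.HasAntidiagonal.antidiagonal (2 * j + 1) with a.1 < 2 * j + 1,
          (-1 : ℂ) ^ a.1 * esymmVal x a.1 * psumVal x a.2 = 0 := by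
        apply Finset.sum_eq_zero
        rintro ⟨b1, b2⟩ hb
        simp only [Finset.mem_filter, Finset.HasAntidiagonal.mem_antidiagonal] at hb
        obtain ⟨hab, hlt⟩ := hb
        rcases Nat.even_or_odd b1 with he | ho
        · obtain ⟨t, ht⟩ := he
          obtain ⟨c, hc⟩ : Odd b2 := ⟨j - t, by omega⟩
          have : psumVal x b2 = 0 := by
            have := h c (by omega)
            rwa [show 2 * c + 1 = b2 by omega] at this
          simp [this]
        · obtain ⟨c, hc⟩ := ho
          have hc2 : c < j := by omega
          have : esymmVal x b1 = 0 := by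
            have := ih c hc2 (le_trans (le_of_lt hc2) hj)
            rwa [show 2 * c + 1 = b1 by omega] at this
          simp [this]
      rw [hsum, mul_zero] at hN
      have hk : ((2 * j + 1 : ℕ) : ℂ) ≠ 0 := Nat.cast_ne_zero.mpr (by omega)
      exact (mul_eq_zero.mp hN).resolve_left hk
end

section
/- If the odd elementary symmetric polynomials e₁, e₃, …, e₍₂⌈n/2⌉₋₁₎ of n variables all vanish (at a point in ℂⁿ), then every odd complete homogeneous symmetric polynomial h_{2r−1}, r ≥ 1, vanishes at that point. -/
/-- Value of the `k`-th complete homogeneous symmetric polynomial at a point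
`x ∈ ℂⁿ`: the sum over all multisets of size `k` of indices of the corresponding
monomials. -/
noncomputable def hsymmVal {n : ℕ} (x : Fin n → ℂ) (k : ℕ) : ℂ :=
  ∑ s : Sym (Fin n) k, (s.1.map x).prod

open Finset in
lemma hsymmVal_eq_coeff {n : ℕ} (x : Fin n → ℂ) (k : ℕ) :
    hsymmVal x k = PowerSeries.coeff k (∏ i : Fin n, PowerSeries.mk fun j => x i ^ j) := by
  classical
  rw [PowerSeries.coeff_prod]
  simp only [PowerSeries.coeff_mk]
  rw [hsymmVal, ← Finset.sum_attach (finsuppAntidiag univ k)]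
  refine Finset.sum_bij' (fun (s : Sym (Fin n) k) _ => (⟨s.1.toFinsupp, ?_⟩ : {l // l ∈ finsuppAntidiag univ k}))
    (fun l _ => (⟨l.1.toMultiset, ?_⟩ : Sym (Fin n) k)) (fun _ _ => mem_attach _ _) (fun _ _ => mem_univ _)
    ?_ ?_ ?_
  · -- membership
    rcases s with ⟨m, hm⟩
    simp only [Finset.mem_finsuppAntidiag]
    constructor
    · have : ∑ i : Fin n, m.toFinsupp i = (m.toFinsupp).sum fun _ v => v :=
        (Finsupp.sum_fintype m.toFinsupp (fun _ v => v) (fun _ => rfl)).symm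
      rw [this]
      have := Multiset.toFinsupp_toMultiset m
      have hcard : Multiset.card ((m.toFinsupp).toMultiset) = (m.toFinsupp).sum fun _ v => v :=
        Finsupp.card_toMultiset _
      rw [this] at hcard
      rw [← hcard, hm]
    · exact Finset.subset_univ _
  · -- card of toMultiset
    rcases l with ⟨l, hl⟩
    simp only [Finset.mem_finsuppAntidiag] at hl
    have hcard : Multiset.card l.toMultiset = l.sum fun _ v => v := Finsupp.card_toMultiset _
    rw [hcard, ← hl.1]
    exact (Finsupp.sum_fintype l (fun _ v => v) (fun _ => rfl))
  · intro s _
    exact Subtype.ext (by simp [Multiset.toFinsupp_toMultiset])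
  · intro l _
    exact Subtype.ext (by simp [Finsupp.toMultiset_toFinsupp])
  · intro s _
    rcases s with ⟨m, hm⟩
    simp only [Multiset.toFinsupp_apply]
    rw [Finset.prod_multiset_map_count]
    refine Finset.prod_subset (Finset.subset_univ m.toFinset) ?_
    intro i _ hi
    rw [Multiset.count_eq_zero_of_notMem (by simpa using hi), pow_zero]

open Finset Polynomial in
/-- If the odd elementary symmetric polynomials `e₁, e₃, …, e_{2⌈n/2⌉−1}` all vanish
at a point of `ℂⁿ`, then every odd complete homogeneous symmetric polynomial
`h_{2r−1}`, `r ≥ 1`, vanishes at that point. -/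
theorem odd_hsymm_vanish_of_odd_esymm_vanish (n : ℕ) (x : Fin n → ℂ)
    (he : ∀ j : ℕ, j < (n + 1) / 2 → esymmVal x (2 * j + 1) = 0) :
    ∀ r : ℕ, 1 ≤ r → hsymmVal x (2 * r - 1) = 0 := by
  classical
  obtain ⟨m, hm⟩ : ∃ m : Multiset ℂ, m = Finset.univ.val.map x := ⟨_, rfl⟩
  have hcardm : Multiset.card m = n := by rw [hm]; simp
  have hesymmVal : ∀ j, m.esymm j = esymmVal x j := by
    intro j
    rw [hm, Finset.esymm_map_val]
    rfl
  have heodd : ∀ j, Odd j → m.esymm j = 0 := by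
    intro j hj
    obtain ⟨a, ha⟩ := hj
    rw [hesymmVal]
    by_cases hjn : j ≤ n
    · subst ha; exact he a (by omega)
    · rw [esymmVal, Finset.powersetCard_eq_empty.mpr (by simpa using Nat.lt_of_not_le hjn),
        Finset.sum_empty]
  have hesymm : ∀ j, (m.map fun a => -a).esymm j = m.esymm j := by
    intro j
    have h2 : (fun a : ℂ => (-1 : ℂ) • a) = fun a => -a := by
      funext a; simp
    have h1 : ((-1 : ℂ)) ^ j • m.esymm j = (m.map fun a => -a).esymm j := by
      rw [← h2]; exact Multiset.pow_smul_esymm (-1 : ℂ) j m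
    rcases Nat.even_or_odd j with hj | hj
    · rw [← h1, hj.neg_one_pow, one_smul]
    · rw [heodd j hj, ← h1, heodd j hj, smul_zero]
  have hneg : m.map (fun a => -a) = m := by
    have hprod : ((m.map fun a => -a).map fun r => X + C r).prod
        = (m.map fun r => X + C r).prod := by
      rw [Multiset.prod_X_add_C_eq_sum_esymm, Multiset.prod_X_add_C_eq_sum_esymm,
        Multiset.card_map]
      exact Finset.sum_congr rfl fun j _ => by rw [hesymm]
    have key : ((m.map fun a => -a).map fun a => X - C a).prod
        = (m.map fun a => X - C a).prod := by
      have e1 : ((m.map fun a => -a).map fun a => X - C a)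
          = (m.map fun r => X + C r) := by
        rw [Multiset.map_map]
        exact Multiset.map_congr rfl fun a _ => by simp [sub_neg_eq_add]
      have e2 : ((m.map fun a => -a).map fun r => X + C r)
          = (m.map fun a => X - C a) := by
        rw [Multiset.map_map]
        exact Multiset.map_congr rfl fun a _ => by simp [sub_eq_add_neg]
      rw [e1, ← e2, hprod]
    have := congrArg Polynomial.roots key
    rwa [Polynomial.roots_multiset_prod_X_sub_C, Polynomial.roots_multiset_prod_X_sub_C] at this
  intro r hr
  have hoddk : Odd (2 * r - 1) := ⟨r - 1, by omega⟩
  have h1 : hsymmVal (fun i => -x i) (2 * r - 1) = hsymmVal x (2 * r - 1) := by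
    rw [hsymmVal_eq_coeff, hsymmVal_eq_coeff]
    congr 1
    have e1 : ∀ y : Fin n → ℂ, (∏ i : Fin n, PowerSeries.mk fun j => y i ^ j)
        = ((Finset.univ.val.map y).map fun a => PowerSeries.mk fun j => a ^ j).prod := by
      intro y
      rw [Multiset.map_map]
      rfl
    rw [e1, e1]
    congr 1
    have : (Finset.univ.val.map fun i => -x i) = m.map fun a => -a := by
      rw [hm, Multiset.map_map]
      rfl
    rw [this, hneg, hm]
  have h2 : hsymmVal (fun i => -x i) (2 * r - 1)
      = (-1 : ℂ) ^ (2 * r - 1) * hsymmVal x (2 * r - 1) := by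
    rw [hsymmVal, hsymmVal, Finset.mul_sum]
    refine Finset.sum_congr rfl fun s _ => ?_
    have e : s.1.map (fun i => -x i) = (s.1.map x).map Neg.neg := by
      rw [Multiset.map_map]; rfl
    rw [e, Multiset.prod_map_neg, Multiset.card_map, s.2]
  rw [h1, hoddk.neg_one_pow, neg_one_mul] at h2
  have h3 : 2 * hsymmVal x (2 * r - 1) = 0 := by linear_combination h2
  simpa using h3
end

section
/- Define polynomials P^{(2n)}_{r,s} in x₁,…,x_{2n} recursively by P^{(2n)}_{1,s} = e^{(2n)}_{2s−1} and P^{(2n)}_{r,s} = P^{(2n)}_{r−1,s+1} − e^{(2n)}_{2s} P^{(2n)}_{r−1,1} for r ≥ 2. Then under the specialization (x_{2n−1}, x_{2n}) = (x, −x) one has P̄^{(2n)}_{r,s} = P^{(2n−2)}_{r,s} − x² P^{(2n−2)}_{r,s−1} for all r ≥ 1 and all s ∈ ℤ. -/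
/-- Value of the elementary symmetric polynomial at a point of `ℂ^N`, indexed by `ℤ`
with the convention `e_k = 0` for `k < 0` (and automatically `e_k = 0` for `k > N`). -/
noncomputable def esymmZ {N : ℕ} (x : Fin N → ℂ) (k : ℤ) : ℂ :=
  if 0 ≤ k then
    ∑ s ∈ Finset.powersetCard k.toNat (Finset.univ : Finset (Fin N)), ∏ i ∈ s, x i
  else 0

/-- The polynomials `P^{(N)}_{r,s}` (evaluated at a point of `ℂ^N`), defined by
`P_{1,s} = e_{2s−1}` and `P_{r,s} = P_{r−1,s+1} − e_{2s} P_{r−1,1}` for `r ≥ 2`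
(the value for `r = 0` is irrelevant and set to `0`). -/
noncomputable def Pval {N : ℕ} (x : Fin N → ℂ) : ℕ → ℤ → ℂ
  | 0, _ => 0
  | 1, s => esymmZ x (2 * s - 1)
  | (r + 2), s => Pval x (r + 1) (s + 1) - esymmZ x (2 * s) * Pval x (r + 1) 1

/-! Since `(1 + x t)(1 - x t) = 1 - x² t²`, appending the variables `x, -x` turns each
elementary symmetric polynomial into `ē_k = e_k - x² e_{k-2}`, and `e_{2s-2} = e_{2(s-1)}` is the
coefficient of the recursion at `s - 1`. Hence the identity propagates through the recursion by
induction on `r`, provided the correction `-x² P_{r-1,0}` in `P̄_{r-1,1}` vanishes, which it does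
because `P_{r,0} = P_{r-1,1} - e_0 P_{r-1,1} = 0`. -/

namespace Multiset

variable {R : Type*} [CommRing R]

theorem esymm_zero (s : Multiset R) : s.esymm 0 = 1 := by
  simp [esymm]

theorem esymm_cons_succ (a : R) (s : Multiset R) (k : ℕ) :
    (a ::ₘ s).esymm (k + 1) = s.esymm (k + 1) + a * s.esymm k := by
  simp [esymm, powersetCard_cons, map_map, sum_map_mul_left]

theorem esymm_cons_cons_neg (x : R) (s : Multiset R) (k : ℕ) :
    (x ::ₘ -x ::ₘ s).esymm (k + 2) = s.esymm (k + 2) - x ^ 2 * s.esymm k := by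
  rw [esymm_cons_succ, esymm_cons_succ, esymm_cons_succ]
  ring

end Multiset

theorem esymmZ_of_neg {N : ℕ} (v : Fin N → ℂ) {k : ℤ} (hk : k < 0) : esymmZ v k = 0 :=
  if_neg hk.not_ge

theorem esymmZ_natCast {N : ℕ} (v : Fin N → ℂ) (k : ℕ) :
    esymmZ v k = (Finset.univ.val.map v).esymm k := by
  rw [esymmZ, if_pos (Int.natCast_nonneg k), Int.toNat_natCast, Finset.esymm_map_val]

theorem univ_val_map_append_pair {N : ℕ} (y : Fin N → ℂ) (a b : ℂ) :
    Finset.univ.val.map (Fin.append y ![a, b]) = a ::ₘ b ::ₘ Finset.univ.val.map y := by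
  rw [Fin.univ_val_map, List.ofFn_fin_append, ← Multiset.coe_add, add_comm]
  simp

theorem esymmZ_append_neg {N : ℕ} (y : Fin N → ℂ) (x : ℂ) (k : ℤ) :
    esymmZ (Fin.append y ![x, -x]) k = esymmZ y k - x ^ 2 * esymmZ y (k - 2) := by
  rcases lt_or_ge k 0 with hk | hk
  · rw [esymmZ_of_neg _ hk, esymmZ_of_neg _ hk, esymmZ_of_neg _ (by omega)]
    ring
  obtain ⟨k, rfl⟩ := Int.eq_ofNat_of_zero_le hk
  rw [esymmZ_natCast, esymmZ_natCast, univ_val_map_append_pair]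
  match k with
  | 0 =>
    rw [Multiset.esymm_zero, Multiset.esymm_zero, esymmZ_of_neg _ (by norm_num)]
    ring
  | 1 =>
    rw [Multiset.esymm_cons_succ, Multiset.esymm_cons_succ, Multiset.esymm_zero,
      Multiset.esymm_zero, esymmZ_of_neg _ (by norm_num)]
    ring
  | k + 2 =>
    rw [Multiset.esymm_cons_cons_neg, show ((k + 2 : ℕ) : ℤ) - 2 = k by push_cast; ring,
      esymmZ_natCast]

theorem Pval_one {N : ℕ} (v : Fin N → ℂ) (s : ℤ) : Pval v 1 s = esymmZ v (2 * s - 1) := by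
  simp [Pval]

theorem Pval_add_two {N : ℕ} (v : Fin N → ℂ) (r : ℕ) (s : ℤ) :
    Pval v (r + 2) s = Pval v (r + 1) (s + 1) - esymmZ v (2 * s) * Pval v (r + 1) 1 := by
  simp [Pval]

theorem Pval_zero_right {N : ℕ} (v : Fin N → ℂ) : ∀ r, Pval v r 0 = 0
  | 0 => by simp [Pval]
  | 1 => by simp [Pval_one, esymmZ]
  | r + 2 => by simp [Pval_add_two, esymmZ]

theorem Pval_append_neg {N : ℕ} (y : Fin N → ℂ) (x : ℂ) :
    ∀ r s, Pval (Fin.append y ![x, -x]) r s = Pval y r s - x ^ 2 * Pval y r (s - 1)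
  | 0, s => by simp [Pval]
  | 1, s => by
    rw [Pval_one, Pval_one, Pval_one, esymmZ_append_neg]
    ring_nf
  | r + 2, s => by
    rw [Pval_add_two, Pval_add_two, Pval_add_two, Pval_append_neg y x (r + 1),
      Pval_append_neg y x (r + 1) 1, esymmZ_append_neg, sub_self, Pval_zero_right]
    ring_nf

theorem Pval_specialize_general (n : ℕ) (y : Fin (2 * n) → ℂ) (x : ℂ) (r : ℕ) (s : ℤ) :
    Pval (Fin.append y ![x, -x]) r s = Pval y r s - x ^ 2 * Pval y r (s - 1) :=
  Pval_append_neg y x r s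

/-- Under the specialization `(x_{2n−1}, x_{2n}) = (x, −x)` one has
`P̄^{(2n)}_{r,s} = P^{(2n−2)}_{r,s} − x² P^{(2n−2)}_{r,s−1}` for all `r ≥ 1`, `s ∈ ℤ`. -/
theorem Pval_specialize (n : ℕ) (y : Fin (2 * n) → ℂ) (x : ℂ) (r : ℕ) (hr : 1 ≤ r) (s : ℤ) :
    Pval (Fin.append y ![x, -x]) r s = Pval y r s - x ^ 2 * Pval y r (s - 1) :=
  Pval_specialize_general n y x r s
end

section
/- Let Asym denote antisymmetrization over the variables X_{r+1}, …, X_{ℓ} (sum over permutations with signs). Then Asym(∏_{a=r+1}^{ℓ} X_a^{2n+1+2r−2a}) = (−1)^{ℓ−r−1} Asym( X_ℓ^{2n−1} ∏_{a=r+1}^{ℓ−1} (1 − x² X_a²) X_a^{2n−1+2r−2a} ), as an identity of polynomials in X_{r+1},…,X_ℓ with coefficients in ℂ[x]. -/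
/-- Antisymmetrization identity: with `Asym f = Σ_{σ} sgn(σ) f∘σ` over the
variables `X_{r+1}, …, X_ℓ` (here relabelled `X_0, …, X_d` with `d = ℓ − r − 1`),
`Asym(∏_{a} X_a^{2n+1+2r−2a}) = (−1)^{ℓ−r−1} Asym(X_ℓ^{2n−1} ∏_{a<ℓ} (1 − x²X_a²) X_a^{2n−1+2r−2a})`,
i.e. in the relabelled variables the exponents are `2n−1−2i` on the left and
`2n−3−2i` (together with the factor `(1 − x²X_i²)`) on the right. -/
theorem asym_identity (n d : ℕ) (hd : d + 1 ≤ n) (x : ℂ) (X : Fin (d + 1) → ℂ) :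
    ∑ σ : Equiv.Perm (Fin (d + 1)), ((Equiv.Perm.sign σ : ℤ) : ℂ) *
        ∏ i : Fin (d + 1), X (σ i) ^ (2 * n - 1 - 2 * (i : ℕ))
    = (-1 : ℂ) ^ d * ∑ σ : Equiv.Perm (Fin (d + 1)), ((Equiv.Perm.sign σ : ℤ) : ℂ) *
        (X (σ (Fin.last d)) ^ (2 * n - 1) *
          ∏ i : Fin d, ((1 - x ^ 2 * X (σ i.castSucc) ^ 2) *
            X (σ i.castSucc) ^ (2 * n - 3 - 2 * (i : ℕ)))) := by
  classical
  set M : Matrix (Fin (d+1)) (Fin (d+1)) ℂ :=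
    fun a b => X a ^ (2*n - 1 - 2*(b:ℕ)) with hM
  set T : Matrix (Fin (d+1)) (Fin (d+1)) ℂ :=
    fun c k => (if c = k then 1 else 0) - (if (c:ℕ)+1 = (k:ℕ) then x^2 else 0) with hT
  set N : Matrix (Fin (d+1)) (Fin (d+1)) ℂ :=
    fun a b => Fin.lastCases (X a ^ (2*n-1))
      (fun i => (1 - x^2 * X a^2) * X a ^ (2*n-3-2*(i:ℕ))) b with hN
  have hL : (∑ σ : Equiv.Perm (Fin (d + 1)), ((Equiv.Perm.sign σ : ℤ) : ℂ) *
      ∏ i : Fin (d + 1), X (σ i) ^ (2 * n - 1 - 2 * (i : ℕ))) = M.det := by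
    rw [Matrix.det_apply']
  have hR : (∑ σ : Equiv.Perm (Fin (d + 1)), ((Equiv.Perm.sign σ : ℤ) : ℂ) *
      (X (σ (Fin.last d)) ^ (2 * n - 1) *
        ∏ i : Fin d, ((1 - x ^ 2 * X (σ i.castSucc) ^ 2) *
          X (σ i.castSucc) ^ (2 * n - 3 - 2 * (i : ℕ))))) = N.det := by
    rw [Matrix.det_apply']
    refine Finset.sum_congr rfl fun σ _ => ?_
    rw [Fin.prod_univ_castSucc]
    simp [hN, zsmul_eq_mul, mul_comm]
  have hNMT : N = (M * T).submatrix id (finRotate (d+1)) := by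
    funext a b
    induction b using Fin.lastCases with
    | last =>
      have h0 : finRotate (d+1) (Fin.last d) = 0 := finRotate_last
      simp only [Matrix.submatrix_apply, Matrix.mul_apply]
      simp only [Matrix.submatrix_apply, id, h0, Matrix.mul_apply, hN, hT, hM,
        Fin.lastCases_last]
      have : ∀ c : Fin (d+1), ¬ ((c:ℕ)+1 = ((0 : Fin (d+1)):ℕ)) := by
        intro c; simp
      rw [Fin.val_zero]
      rw [Finset.sum_congr rfl (fun c _ => by
        rw [if_neg (by omega : ¬ ((c:ℕ)+1 = 0)), sub_zero])]
      simp
    | cast i =>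
      have hrot : finRotate (d+1) i.castSucc = i.succ := by
        rw [finRotate_succ_apply, Fin.coeSucc_eq_succ]
      simp only [Matrix.submatrix_apply, Matrix.mul_apply]
      simp only [Matrix.submatrix_apply, id, hrot, Matrix.mul_apply, hN, hT, hM,
        Fin.lastCases_castSucc]
      have hsplit : ∀ c : Fin (d+1),
          X a ^ (2*n - 1 - 2*(c:ℕ)) *
            ((if c = i.succ then (1:ℂ) else 0) - (if (c:ℕ)+1 = ((i.succ:Fin (d+1)):ℕ) then x^2 else 0))
          = (if c = i.succ then X a ^ (2*n - 1 - 2*(c:ℕ)) else 0)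
            - (if c = i.castSucc then x^2 * X a ^ (2*n - 1 - 2*(c:ℕ)) else 0) := by
        intro c
        have hcond : ((c:ℕ)+1 = ((i.succ:Fin (d+1)):ℕ)) ↔ c = i.castSucc := by
          rw [Fin.val_succ, Fin.ext_iff, Fin.coe_castSucc]; omega
        rw [mul_sub]
        congr 1
        · split <;> simp
        · by_cases h : c = i.castSucc
          · rw [if_pos (hcond.mpr h), if_pos h]; ring
          · rw [if_neg (fun hc => h (hcond.mp hc)), if_neg h, mul_zero]
      rw [Finset.sum_congr rfl (fun c _ => hsplit c), Finset.sum_sub_distrib,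
        Finset.sum_ite_eq' Finset.univ i.succ, Finset.sum_ite_eq' Finset.univ i.castSucc]
      have hi : (i : ℕ) < d := i.isLt
      have h1 : 2*n - 1 - 2*((i.succ : Fin (d+1)) : ℕ) = 2*n - 3 - 2*(i:ℕ) := by
        rw [Fin.val_succ]; omega
      have h2 : 2*n - 1 - 2*((i.castSucc : Fin (d+1)) : ℕ) = (2*n - 3 - 2*(i:ℕ)) + 2 := by
        rw [Fin.coe_castSucc]; omega
      simp only [Finset.mem_univ, if_true, h1, h2, pow_add]
      ring
  have hTdet : T.det = 1 := by
    have htri : T.BlockTriangular id := by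
      intro c k hk
      simp only [id] at hk
      have hkc : (k:ℕ) < (c:ℕ) := hk
      simp only [hT]
      rw [if_neg (by exact fun h => absurd (congrArg Fin.val h) (by omega)),
        if_neg (by omega : ¬ ((c:ℕ)+1 = (k:ℕ)))]
      ring
    rw [Matrix.det_of_upperTriangular htri]
    have : ∀ c : Fin (d+1), T c c = 1 := by
      intro c
      simp [hT]
    simp [this]
  have hsign : ((Equiv.Perm.sign (finRotate (d+1)) : ℤ) : ℂ) = (-1 : ℂ)^d := by
    rw [sign_finRotate]; push_cast; ring
  have hNdet : N.det = (-1 : ℂ)^d * M.det := by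
    rw [hNMT, Matrix.det_permute', Matrix.det_mul, hTdet, mul_one]
    rw_mod_cast [hsign]
  rw [hL, hR, hNdet, ← mul_assoc, ← mul_pow]
  norm_num
end

section
/- Define Ξ₂^{(n)}(X₁,X₂) by 2Ξ₂^{(n)}(X₁,X₂) = (Θ₊^{(n)}(X₁)Θ₊^{(n)}(X₂) − Θ₋^{(n)}(X₁)Θ₋^{(n)}(X₂))·(X₁−X₂)/(X₁+X₂) + (−1)^n (Θ₊^{(n)}(X₁)Θ₋^{(n)}(X₂) − Θ₊^{(n)}(X₂)Θ₋^{(n)}(X₁)). Then Ξ₂^{(n)} is a polynomial in X₁, X₂, x₁,…,xₙ (the apparent pole at X₁ = −X₂ cancels), it is antisymmetric under X₁ ↔ X₂, and it vanishes when X₂ = ± x^{−1} and (x_{n−1}, x_n) = (x, −x). -/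
/-- `Θ₊^{(n)}(X) = ∏_{j=1}^n (1 + X x_j)`. -/
noncomputable def ThetaP {N : ℕ} (x : Fin N → ℂ) (X : ℂ) : ℂ := ∏ j, (1 + X * x j)

/-- `Θ₋^{(n)}(X) = ∏_{j=1}^n (1 − X x_j)`. -/
noncomputable def ThetaM {N : ℕ} (x : Fin N → ℂ) (X : ℂ) : ℂ := ∏ j, (1 - X * x j)

/-- `Ξ₂^{(n)}(X₁,X₂)`, defined (away from `X₁ + X₂ = 0`) by
`2Ξ₂ = (Θ₊(X₁)Θ₊(X₂) − Θ₋(X₁)Θ₋(X₂))(X₁−X₂)/(X₁+X₂)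
      + (−1)^n (Θ₊(X₁)Θ₋(X₂) − Θ₊(X₂)Θ₋(X₁))`. -/
noncomputable def Xi2 {N : ℕ} (x : Fin N → ℂ) (X1 X2 : ℂ) : ℂ :=
  (1 / 2 : ℂ) *
    ((ThetaP x X1 * ThetaP x X2 - ThetaM x X1 * ThetaM x X2) *(X1 - X2) / (X1 + X2)
      + (-1 : ℂ) ^ N * (ThetaP x X1 * ThetaM x X2 - ThetaP x X2 * ThetaM x X1))

/-!
The only non-obvious claim is polynomiality. Factorwise,
`(1 + X₁ x)(1 + X₂ x) − (1 − X₁ x)(1 − X₂ x) = 2 (X₁ + X₂) x`, so `X₁ + X₂` divides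
`Θ₊(X₁)Θ₊(X₂) − Θ₋(X₁)Θ₋(X₂)` already as a polynomial, and the quotient is the
polynomial replacing the fraction. Antisymmetry is a rearrangement. For the vanishing,
`X₂ = ±x⁻¹` makes one factor of `Θ₊(X₂)` and one factor of `Θ₋(X₂)` vanish (those of
`x` and `−x`), and each term of `Ξ₂` contains `Θ₊(X₂)` or `Θ₋(X₂)`.
-/

open MvPolynomial

theorem Finset.dvd_prod_sub_prod {ι R : Type*} [CommRing R] (s : Finset ι) {d : R}
    {f g : ι → R} (h : ∀ i ∈ s, d ∣ f i - g i) : d ∣ ∏ i ∈ s, f i - ∏ i ∈ s, g i := by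
  simp_rw [← Ideal.mem_span_singleton, ← Ideal.Quotient.eq] at h ⊢
  simp only [map_prod]
  exact Finset.prod_congr rfl h

section Polynomial

variable (N : ℕ)

noncomputable def thetaPPoly (i : Fin 2) : MvPolynomial (Fin 2 ⊕ Fin N) ℂ :=
  ∏ j, (1 + X (Sum.inl i) * X (Sum.inr j))

noncomputable def thetaMPoly (i : Fin 2) : MvPolynomial (Fin 2 ⊕ Fin N) ℂ :=
  ∏ j, (1 - X (Sum.inl i) * X (Sum.inr j))

variable {N}

theorem eval_thetaPPoly (X1 X2 : ℂ) (x : Fin N → ℂ) (i : Fin 2) :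
    eval (Sum.elim ![X1, X2] x) (thetaPPoly N i) = ThetaP x (![X1, X2] i) := by
  simp [thetaPPoly, ThetaP]

theorem eval_thetaMPoly (X1 X2 : ℂ) (x : Fin N → ℂ) (i : Fin 2) :
    eval (Sum.elim ![X1, X2] x) (thetaMPoly N i) = ThetaM x (![X1, X2] i) := by
  simp [thetaMPoly, ThetaM]

theorem X_add_X_dvd_thetaPPoly_mul_sub_thetaMPoly_mul :
    X (Sum.inl 0) + X (Sum.inl 1) ∣
      thetaPPoly N 0 * thetaPPoly N 1 - thetaMPoly N 0 * thetaMPoly N 1 := by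
  simp only [thetaPPoly, thetaMPoly, ← Finset.prod_mul_distrib]
  exact Finset.dvd_prod_sub_prod _ fun j _ => Dvd.intro (2 * X (Sum.inr j)) (by ring)

theorem exists_eval_eq_thetaP_mul_sub_thetaM_mul_div :
    ∃ q : MvPolynomial (Fin 2 ⊕ Fin N) ℂ, ∀ (X1 X2 : ℂ) (x : Fin N → ℂ), X1 + X2 ≠ 0 →
      eval (Sum.elim ![X1, X2] x) q =
        (ThetaP x X1 * ThetaP x X2 - ThetaM x X1 * ThetaM x X2) / (X1 + X2) := by
  obtain ⟨q, hq⟩ := X_add_X_dvd_thetaPPoly_mul_sub_thetaMPoly_mul (N := N)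
  refine ⟨q, fun X1 X2 x hne => eq_div_of_mul_eq hne ?_⟩
  have := congrArg (eval (Sum.elim ![X1, X2] x)) hq
  simp only [map_sub, map_mul, map_add, eval_thetaPPoly, eval_thetaMPoly, eval_X] at this
  simpa [mul_comm] using this.symm

end Polynomial

theorem Xi2_swap {N : ℕ} (x : Fin N → ℂ) (X1 X2 : ℂ) : Xi2 x X2 X1 = -Xi2 x X1 X2 := by
  unfold Xi2
  rw [add_comm X2 X1]
  ring

theorem Xi2_eq_zero_of_thetaP_eq_zero_of_thetaM_eq_zero {N : ℕ} {x : Fin N → ℂ} (X1 : ℂ)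
    {X2 : ℂ} (hP : ThetaP x X2 = 0) (hM : ThetaM x X2 = 0) : Xi2 x X1 X2 = 0 := by
  simp [Xi2, hP, hM]

theorem ThetaP_eq_zero {N : ℕ} {x : Fin N → ℂ} {X : ℂ} (j : Fin N) (h : X * x j = -1) :
    ThetaP x X = 0 :=
  Finset.prod_eq_zero (Finset.mem_univ j) (by rw [h, add_neg_cancel])

theorem ThetaM_eq_zero {N : ℕ} {x : Fin N → ℂ} {X : ℂ} (j : Fin N) (h : X * x j = 1) :
    ThetaM x X = 0 :=
  Finset.prod_eq_zero (Finset.mem_univ j) (by rw [h, sub_self])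

theorem ThetaP_append_eq_zero_and_ThetaM_append_eq_zero {M : ℕ} (y : Fin M → ℂ) {x X : ℂ}
    (h : X * x = 1 ∨ X * x = -1) :
    ThetaP (Fin.append y ![x, -x]) X = 0 ∧ ThetaM (Fin.append y ![x, -x]) X = 0 := by
  have hx : Fin.append y ![x, -x] (Fin.natAdd M 0) = x := by simp
  have hnx : Fin.append y ![x, -x] (Fin.natAdd M 1) = -x := by simp
  rcases h with h | h
  · exact ⟨ThetaP_eq_zero _ (by rw [hnx, mul_neg, h]), ThetaM_eq_zero _ (by rw [hx, h])⟩
  · exact ⟨ThetaP_eq_zero _ (by rw [hx, h]), ThetaM_eq_zero _ (by rw [hnx, mul_neg, h, neg_neg])⟩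

/-- `Ξ₂^{(n)}` is a polynomial in `X₁, X₂, x₁, …, xₙ` (the apparent pole at
`X₁ = −X₂` cancels), is antisymmetric under `X₁ ↔ X₂`, and vanishes when
`X₂ = ±x^{−1}` and `(x_{n−1}, x_n) = (x, −x)`. -/
theorem Xi2_properties (N : ℕ) :
    (∃ F : MvPolynomial (Fin 2 ⊕ Fin N) ℂ,
      ∀ (X1 X2 : ℂ) (x : Fin N → ℂ), X1 + X2 ≠ 0 →
        MvPolynomial.eval (Sum.elim ![X1, X2] x) F = Xi2 x X1 X2) ∧
    (∀ (x : Fin N → ℂ) (X1 X2 : ℂ), X1 + X2 ≠ 0 → Xi2 x X2 X1 = - Xi2 x X1 X2) ∧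
    (∀ (M : ℕ) (y : Fin M → ℂ) (x X1 ε : ℂ), x ≠ 0 → (ε = 1 ∨ ε = -1) →
      X1 + ε * x⁻¹ ≠ 0 → Xi2 (Fin.append y ![x, -x]) X1 (ε * x⁻¹) = 0) := by
  refine ⟨?_, fun x X1 X2 _ => Xi2_swap x X1 X2, ?_⟩
  · obtain ⟨q, hq⟩ := exists_eval_eq_thetaP_mul_sub_thetaM_mul_div (N := N)
    refine ⟨C (1 / 2) * (q * (X (Sum.inl 0) - X (Sum.inl 1)) + C ((-1) ^ N) *
      (thetaPPoly N 0 * thetaMPoly N 1 - thetaPPoly N 1 * thetaMPoly N 0)), ?_⟩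
    intro X1 X2 x hne
    simp only [map_mul, map_add, map_sub, eval_C, eval_X, hq X1 X2 x hne, eval_thetaPPoly,
      eval_thetaMPoly, Xi2, Sum.elim_inl, Matrix.cons_val_zero, Matrix.cons_val_one]
    ring
  · intro M y x X1 ε hx hε _
    have hεx : ε * x⁻¹ * x = ε := by rw [mul_assoc, inv_mul_cancel₀ hx, mul_one]
    obtain ⟨hP, hM⟩ := ThetaP_append_eq_zero_and_ThetaM_append_eq_zero y (X := ε * x⁻¹)
      (by rwa [hεx])
    exact Xi2_eq_zero_of_thetaP_eq_zero_of_thetaM_eq_zero X1 hP hM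
end

section
/- For fixed n and for every ℓ with n − 2ℓ = λ ≥ 0, the Gaussian binomial expression [n choose ℓ]_q − [n choose ℓ−1]_q is a polynomial in q with non-negative integer coefficients. -/
/-- The `q`-factorial `[k]_q! = ∏_{j=1}^k (1 − q^j)` as a rational function in `q`. -/
noncomputable def qfact (k : ℕ) : RatFunc ℚ :=
  ∏ j ∈ Finset.Icc 1 k, (1 - RatFunc.X ^ j)

/-- The Gaussian binomial `[n choose ℓ]_q = [n]_q!/([ℓ]_q![n−ℓ]_q!)`. -/
noncomputable def qbinom (n l : ℕ) : RatFunc ℚ := qfact n / (qfact l * qfact (n - l))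

lemma one_sub_X_pow_ne_zero (j : ℕ) (hj : j ≠ 0) : (1 - RatFunc.X ^ j : RatFunc ℚ) ≠ 0 := by
  intro hcon
  have h1 : (RatFunc.X : RatFunc ℚ) ^ j = 1 := (sub_eq_zero.mp hcon).symm
  have h2 : algebraMap (Polynomial ℚ) (RatFunc ℚ) (Polynomial.X ^ j) =
      algebraMap (Polynomial ℚ) (RatFunc ℚ) 1 := by
    simpa [RatFunc.algebraMap_X] using h1
  have h3 : (Polynomial.X : Polynomial ℚ) ^ j = 1 := RatFunc.algebraMap_injective ℚ h2
  have h4 := congrArg (Polynomial.eval 0) h3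
  simp [zero_pow hj] at h4

lemma qfact_ne_zero (k : ℕ) : qfact k ≠ 0 := by
  unfold qfact
  exact Finset.prod_ne_zero_iff.mpr fun j hj =>
    one_sub_X_pow_ne_zero j (by simp at hj; omega)

lemma qfact_zero : qfact 0 = 1 := by simp [qfact]

lemma qfact_succ (k : ℕ) : qfact (k + 1) = qfact k * (1 - RatFunc.X ^ (k + 1)) := by
  unfold qfact
  rw [Finset.prod_Icc_succ_top (by omega)]

lemma qfact_succ' (a b : ℕ) (h : b = a + 1) : qfact b = qfact a * (1 - RatFunc.X ^ b) := by
  subst h; exact qfact_succ a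

lemma qbinom_zero (n : ℕ) : qbinom n 0 = 1 := by
  unfold qbinom
  rw [qfact_zero, one_mul, Nat.sub_zero, div_self (qfact_ne_zero n)]

lemma qbinom_one_one : qbinom 1 1 = 1 := by
  unfold qbinom
  rw [show (1:ℕ) - 1 = 0 from rfl, qfact_zero, mul_one, div_self (qfact_ne_zero 1)]

lemma step1 (m : ℕ) : qbinom (m+2) 1 - qbinom (m+1) 1 = RatFunc.X ^ (m+1) := by
  unfold qbinom
  rw [show m+2-1 = m+1 from by omega, show m+1-1 = m from by omega]
  rw [qfact_succ' (m+1) (m+2) (by omega), qfact_succ' m (m+1) (by omega),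
    qfact_succ' 0 1 (by omega), qfact_zero]
  have h0 := qfact_ne_zero m
  have h1 := one_sub_X_pow_ne_zero (m+1) (by omega)
  have h2 := one_sub_X_pow_ne_zero (m+2) (by omega)
  have h3 : (1 - RatFunc.X : RatFunc ℚ) ≠ 0 := by
    simpa using one_sub_X_pow_ne_zero 1 (by omega)
  field_simp
  ring


lemma comb8 {K : Type*} [Field K] (b1 b2 b3 b4 b5 b6 b7 b8 e D : K)
    (h : b1 - b2 = b3 - b4 + (b5 - b6 - e * (b7 - b8))) :
    b1/D - b2/D = b3/D - b4/D + (b5/D - b6/D - e * (b7/D - b8/D)) := by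
  simp only [← sub_div, ← mul_div_assoc, ← add_div]
  rw [h]

lemma comb6 {K : Type*} [Field K] (b1 b2 b3 b4 b5 b6 e D : K)
    (h : b1 - b2 = b3 - b4 - e * (b5 - b6)) :
    b1/D - b2/D = b3/D - b4/D - e * (b5/D - b6/D) := by
  simp only [← sub_div, ← mul_div_assoc]
  rw [h]

lemma field_key {K : Type*} [Field K] (A C T y1 y2 y3 y4 z5 z6 : K)
    (hA : A ≠ 0) (hC : C ≠ 0)
    (h1 : 1 - y1 ≠ 0) (h2 : 1 - y2 ≠ 0) (h3 : 1 - y3 ≠ 0) (h4 : 1 - y4 ≠ 0)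
    (hz5 : z5 = y1 * y3) (hz6 : z6 = y2 * y3) (hy : y1 * y4 = y2 * y3) :
    T * (1 - z5) * (1 - z6) / (A * (1 - y1) * (1 - y2) * (C * (1 - y3)))
      - T * (1 - z5) * (1 - z6) / (A * (1 - y1) * (C * (1 - y3) * (1 - y4)))
    = (T * (1 - z5) / (A * (1 - y1) * (1 - y2) * C)
        - T * (1 - z5) / (A * (1 - y1) * (C * (1 - y3))))
      + ((T * (1 - z5) / (A * (1 - y1) * (C * (1 - y3)))
          - T * (1 - z5) / (A * (C * (1 - y3) * (1 - y4))))
        - (1 - z5) * (T / (A * (1 - y1) * C) - T / (A * (C * (1 - y3))))) := by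
  subst hz5 hz6
  set D : K := A * (1 - y1) * (1 - y2) * (C * (1 - y3) * (1 - y4)) with hDdef
  have hD : D ≠ 0 := by
    apply mul_ne_zero (mul_ne_zero (mul_ne_zero hA h1) h2)
    exact mul_ne_zero (mul_ne_zero hC h3) h4
  have d1 : A * (1 - y1) * (1 - y2) * (C * (1 - y3)) ≠ 0 :=
    mul_ne_zero (mul_ne_zero (mul_ne_zero hA h1) h2) (mul_ne_zero hC h3)
  have d2 : A * (1 - y1) * (C * (1 - y3) * (1 - y4)) ≠ 0 :=
    mul_ne_zero (mul_ne_zero hA h1) (mul_ne_zero (mul_ne_zero hC h3) h4)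
  have d3 : A * (1 - y1) * (1 - y2) * C ≠ 0 :=
    mul_ne_zero (mul_ne_zero (mul_ne_zero hA h1) h2) hC
  have d4 : A * (1 - y1) * (C * (1 - y3)) ≠ 0 :=
    mul_ne_zero (mul_ne_zero hA h1) (mul_ne_zero hC h3)
  have d6 : A * (C * (1 - y3) * (1 - y4)) ≠ 0 :=
    mul_ne_zero hA (mul_ne_zero (mul_ne_zero hC h3) h4)
  have d7 : A * (1 - y1) * C ≠ 0 := mul_ne_zero (mul_ne_zero hA h1) hC
  have d8 : A * (C * (1 - y3)) ≠ 0 := mul_ne_zero hA (mul_ne_zero hC h3)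
  have t1 : T * (1 - y1*y3) * (1 - y2*y3) / (A * (1 - y1) * (1 - y2) * (C * (1 - y3)))
      = T * (1 - y1*y3) * (1 - y2*y3) * (1 - y4) / D := by
    rw [div_eq_div_iff d1 hD, hDdef]; ring
  have t2 : T * (1 - y1*y3) * (1 - y2*y3) / (A * (1 - y1) * (C * (1 - y3) * (1 - y4)))
      = T * (1 - y1*y3) * (1 - y2*y3) * (1 - y2) / D := by
    rw [div_eq_div_iff d2 hD, hDdef]; ring
  have t3 : T * (1 - y1*y3) / (A * (1 - y1) * (1 - y2) * C)
      = T * (1 - y1*y3) * ((1 - y3) * (1 - y4)) / D := by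
    rw [div_eq_div_iff d3 hD, hDdef]; ring
  have t4 : T * (1 - y1*y3) / (A * (1 - y1) * (C * (1 - y3)))
      = T * (1 - y1*y3) * ((1 - y2) * (1 - y4)) / D := by
    rw [div_eq_div_iff d4 hD, hDdef]; ring
  have t6 : T * (1 - y1*y3) / (A * (C * (1 - y3) * (1 - y4)))
      = T * (1 - y1*y3) * ((1 - y1) * (1 - y2)) / D := by
    rw [div_eq_div_iff d6 hD, hDdef]; ring
  have t7 : T / (A * (1 - y1) * C) = T * ((1 - y2) * ((1 - y3) * (1 - y4))) / D := by
    rw [div_eq_div_iff d7 hD, hDdef]; ring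
  have t8 : T / (A * (C * (1 - y3))) = T * ((1 - y1) * ((1 - y2) * (1 - y4))) / D := by
    rw [div_eq_div_iff d8 hD, hDdef]; ring
  rw [t1, t2, t3, t4, t6, t7, t8]
  apply comb8
  linear_combination (-(T * (1 - y2) * (1 - y1 * y3))) * hy

lemma field_key2 {K : Type*} [Field K] (A T y1 y2 y3 z4 z5 : K)
    (hA : A ≠ 0)
    (h1 : 1 - y1 ≠ 0) (h2 : 1 - y2 ≠ 0) (h3 : 1 - y3 ≠ 0)
    (hz4 : z4 = y1 * y2) (hz5 : z5 = y1 * y3) (hy : y1 * y3 = y2 * y2) :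
    T * (1 - z4) * (1 - z5) / (A * (1 - y1) * (1 - y2) * (A * (1 - y1) * (1 - y2)))
      - T * (1 - z4) * (1 - z5) / (A * (1 - y1) * (A * (1 - y1) * (1 - y2) * (1 - y3)))
    = (T * (1 - z4) / (A * (1 - y1) * (A * (1 - y1) * (1 - y2)))
        - T * (1 - z4) / (A * (A * (1 - y1) * (1 - y2) * (1 - y3))))
      - (1 - z4) * (T / (A * (1 - y1) * (A * (1 - y1)))
          - T / (A * (A * (1 - y1) * (1 - y2)))) := by
  subst hz4 hz5
  set D : K := A * (1 - y1) * (1 - y2) * (A * (1 - y1) * (1 - y2) * (1 - y3)) with hDdef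
  have hD : D ≠ 0 := by
    apply mul_ne_zero (mul_ne_zero (mul_ne_zero hA h1) h2)
    exact mul_ne_zero (mul_ne_zero (mul_ne_zero hA h1) h2) h3
  have d1 : A * (1 - y1) * (1 - y2) * (A * (1 - y1) * (1 - y2)) ≠ 0 :=
    mul_ne_zero (mul_ne_zero (mul_ne_zero hA h1) h2)
      (mul_ne_zero (mul_ne_zero hA h1) h2)
  have d2 : A * (1 - y1) * (A * (1 - y1) * (1 - y2) * (1 - y3)) ≠ 0 :=
    mul_ne_zero (mul_ne_zero hA h1)
      (mul_ne_zero (mul_ne_zero (mul_ne_zero hA h1) h2) h3)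
  have d3 : A * (1 - y1) * (A * (1 - y1) * (1 - y2)) ≠ 0 :=
    mul_ne_zero (mul_ne_zero hA h1) (mul_ne_zero (mul_ne_zero hA h1) h2)
  have d4 : A * (A * (1 - y1) * (1 - y2) * (1 - y3)) ≠ 0 :=
    mul_ne_zero hA (mul_ne_zero (mul_ne_zero (mul_ne_zero hA h1) h2) h3)
  have d5 : A * (1 - y1) * (A * (1 - y1)) ≠ 0 :=
    mul_ne_zero (mul_ne_zero hA h1) (mul_ne_zero hA h1)
  have d6 : A * (A * (1 - y1) * (1 - y2)) ≠ 0 :=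
    mul_ne_zero hA (mul_ne_zero (mul_ne_zero hA h1) h2)
  have t1 : T * (1 - y1*y2) * (1 - y1*y3) / (A * (1 - y1) * (1 - y2) * (A * (1 - y1) * (1 - y2)))
      = T * (1 - y1*y2) * (1 - y1*y3) * (1 - y3) / D := by
    rw [div_eq_div_iff d1 hD, hDdef]; ring
  have t2 : T * (1 - y1*y2) * (1 - y1*y3) / (A * (1 - y1) * (A * (1 - y1) * (1 - y2) * (1 - y3)))
      = T * (1 - y1*y2) * (1 - y1*y3) * (1 - y2) / D := by
    rw [div_eq_div_iff d2 hD, hDdef]; ring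
  have t3 : T * (1 - y1*y2) / (A * (1 - y1) * (A * (1 - y1) * (1 - y2)))
      = T * (1 - y1*y2) * ((1 - y2) * (1 - y3)) / D := by
    rw [div_eq_div_iff d3 hD, hDdef]; ring
  have t4 : T * (1 - y1*y2) / (A * (A * (1 - y1) * (1 - y2) * (1 - y3)))
      = T * (1 - y1*y2) * ((1 - y1) * (1 - y2)) / D := by
    rw [div_eq_div_iff d4 hD, hDdef]; ring
  have t5 : T / (A * (1 - y1) * (A * (1 - y1)))
      = T * ((1 - y2) * ((1 - y2) * (1 - y3))) / D := by
    rw [div_eq_div_iff d5 hD, hDdef]; ring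
  have t6 : T / (A * (A * (1 - y1) * (1 - y2)))
      = T * ((1 - y1) * ((1 - y2) * (1 - y3))) / D := by
    rw [div_eq_div_iff d6 hD, hDdef]; ring
  rw [t1, t2, t3, t4, t5, t6]
  apply comb6
  linear_combination (-(T * (1 - y3) * (1 - y1 * y2))) * hy

lemma pow_split (a b c : ℕ) (h : a = b + c) :
    (RatFunc.X : RatFunc ℚ) ^ a = RatFunc.X ^ b * RatFunc.X ^ c := by
  subst h; rw [pow_add]

lemma main_id (k m : ℕ) :
    qbinom (2*k+5+m) (k+2) - qbinom (2*k+5+m) (k+1)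
      = (qbinom (2*k+4+m) (k+2) - qbinom (2*k+4+m) (k+1))
        + ((qbinom (2*k+4+m) (k+1) - qbinom (2*k+4+m) k)
          - (1 - RatFunc.X ^ (2*k+4+m)) * (qbinom (2*k+3+m) (k+1) - qbinom (2*k+3+m) k)) := by
  unfold qbinom
  rw [show 2*k+5+m - (k+2) = k+3+m from by omega,
      show 2*k+5+m - (k+1) = k+4+m from by omega,
      show 2*k+4+m - (k+2) = k+2+m from by omega,
      show 2*k+4+m - (k+1) = k+3+m from by omega,
      show 2*k+4+m - k = k+4+m from by omega,
      show 2*k+3+m - (k+1) = k+2+m from by omega,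
      show 2*k+3+m - k = k+3+m from by omega]
  rw [qfact_succ' (2*k+4+m) (2*k+5+m) (by omega), qfact_succ' (2*k+3+m) (2*k+4+m) (by omega),
      qfact_succ' (k+3+m) (k+4+m) (by omega), qfact_succ' (k+2+m) (k+3+m) (by omega),
      qfact_succ' (k+1) (k+2) (by omega), qfact_succ' k (k+1) (by omega)]
  exact field_key (qfact k) (qfact (k+2+m)) (qfact (2*k+3+m))
    (RatFunc.X ^ (k+1)) (RatFunc.X ^ (k+2)) (RatFunc.X ^ (k+3+m)) (RatFunc.X ^ (k+4+m))
    (RatFunc.X ^ (2*k+4+m)) (RatFunc.X ^ (2*k+5+m))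
    (qfact_ne_zero k) (qfact_ne_zero (k+2+m))
    (one_sub_X_pow_ne_zero _ (by omega)) (one_sub_X_pow_ne_zero _ (by omega))
    (one_sub_X_pow_ne_zero _ (by omega)) (one_sub_X_pow_ne_zero _ (by omega))
    (pow_split _ _ _ (by omega)) (pow_split _ _ _ (by omega))
    (by rw [← pow_add, ← pow_add]; congr 1; omega)

lemma diag_id (k : ℕ) :
    qbinom (2*k+4) (k+2) - qbinom (2*k+4) (k+1)
      = (qbinom (2*k+3) (k+1) - qbinom (2*k+3) k)
        - (1 - RatFunc.X ^ (2*k+3)) * (qbinom (2*k+2) (k+1) - qbinom (2*k+2) k) := by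
  unfold qbinom
  rw [show 2*k+4 - (k+2) = k+2 from by omega,
      show 2*k+4 - (k+1) = k+3 from by omega,
      show 2*k+3 - (k+1) = k+2 from by omega,
      show 2*k+3 - k = k+3 from by omega,
      show 2*k+2 - (k+1) = k+1 from by omega,
      show 2*k+2 - k = k+2 from by omega]
  rw [qfact_succ' (2*k+3) (2*k+4) (by omega), qfact_succ' (2*k+2) (2*k+3) (by omega),
      qfact_succ' (k+2) (k+3) (by omega), qfact_succ' (k+1) (k+2) (by omega),
      qfact_succ' k (k+1) (by omega)]
  exact field_key2 (qfact k) (qfact (2*k+2))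
    (RatFunc.X ^ (k+1)) (RatFunc.X ^ (k+2)) (RatFunc.X ^ (k+3))
    (RatFunc.X ^ (2*k+3)) (RatFunc.X ^ (2*k+4))
    (qfact_ne_zero k)
    (one_sub_X_pow_ne_zero _ (by omega)) (one_sub_X_pow_ne_zero _ (by omega))
    (one_sub_X_pow_ne_zero _ (by omega))
    (pow_split _ _ _ (by omega)) (pow_split _ _ _ (by omega))
    (by rw [← pow_add, ← pow_add]; congr 1; omega)

lemma main_id' (k n : ℕ) (h : 2*(k+2) ≤ n+1) :
    qbinom (n+2) (k+2) - qbinom (n+2) (k+1)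
      = (qbinom (n+1) (k+2) - qbinom (n+1) (k+1))
        + ((qbinom (n+1) (k+1) - qbinom (n+1) k)
          - (1 - RatFunc.X ^ (n+1)) * (qbinom n (k+1) - qbinom n k)) := by
  obtain ⟨m, rfl⟩ : ∃ m, n = 2*k+3+m := ⟨n - (2*k+3), by omega⟩
  rw [show 2*k+3+m+2 = 2*k+5+m from by omega, show 2*k+3+m+1 = 2*k+4+m from by omega]
  exact main_id k m

lemma diag_id' (k n : ℕ) (h : n + 2 = 2*(k+2)) :
    qbinom (n+2) (k+2) - qbinom (n+2) (k+1)
      = (qbinom (n+1) (k+1) - qbinom (n+1) k)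
        - (1 - RatFunc.X ^ (n+1)) * (qbinom n (k+1) - qbinom n k) := by
  obtain rfl : n = 2*k+2 := by omega
  rw [show 2*k+2+2 = 2*k+4 from by omega, show 2*k+2+1 = 2*k+3 from by omega]
  exact diag_id k

/-- The truncated Gaussian-binomial difference. -/
noncomputable def Bf (n l : ℕ) : RatFunc ℚ :=
  if 2 * l ≤ n then qbinom n l - (if l = 0 then 0 else qbinom n (l - 1)) else 0

lemma Bf_zero (n : ℕ) : Bf n 0 = 1 := by
  simp [Bf, qbinom_zero]

lemma Bf_pos (n l : ℕ) (h : 2*(l+1) ≤ n) : Bf n (l+1) = qbinom n (l+1) - qbinom n l := by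
  simp [Bf, h]

lemma Bf_neg (n l : ℕ) (h : ¬ 2*l ≤ n) : Bf n l = 0 := by
  simp [Bf, h]

/-- Ballot-path polynomials (paths weighted by the major index), split according to
the last step being up (`.1`) or down (`.2`). -/
noncomputable def ud : ℕ → (ℕ → Polynomial ℕ) × (ℕ → Polynomial ℕ)
  | 0 => (fun _ => 0, fun _ => 0)
  | 1 => (fun l => if l = 0 then 1 else 0, fun _ => 0)
  | (n+2) =>
      (fun l => (ud (n+1)).1 l + (ud (n+1)).2 l,
       fun l => if 1 ≤ l ∧ 2 * l ≤ n + 2 then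
           (ud (n+1)).2 (l-1) + Polynomial.X ^ (n+1) * (ud (n+1)).1 (l-1) else 0)

/-- The canonical map `Polynomial ℕ → RatFunc ℚ`. -/
noncomputable def toRF : Polynomial ℕ →+* RatFunc ℚ :=
  (algebraMap (Polynomial ℚ) (RatFunc ℚ)).comp (Polynomial.mapRingHom (Nat.castRingHom ℚ))

lemma toRF_X_pow (j : ℕ) : toRF (Polynomial.X ^ j) = RatFunc.X ^ j := by
  simp [toRF, RatFunc.algebraMap_X]

lemma key : ∀ n l, toRF ((ud (n+1)).1 l) = Bf n l ∧
    toRF ((ud (n+1)).2 l) = Bf (n+1) l - Bf n l := by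
  intro n
  induction n with
  | zero =>
    intro l
    constructor
    · by_cases hl : l = 0
      · subst hl; simp [ud, Bf, qbinom_zero]
      · simp [ud, hl, Bf_neg 0 l (by omega)]
    · by_cases hl : l = 0
      · subst hl; simp [ud, Bf_zero]
      · simp [ud, Bf_neg 1 l (by omega), Bf_neg 0 l (by omega)]
  | succ n ih =>
    intro l
    rw [show n+1+1 = n+2 from by omega]
    constructor
    · show toRF ((ud (n+2)).1 l) = Bf (n+1) l
      simp only [ud, map_add]
      rw [(ih l).1, (ih l).2]
      ring
    · show toRF ((ud (n+2)).2 l) = Bf (n+2) l - Bf (n+1) l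
      simp only [ud]
      by_cases hc : 1 ≤ l ∧ 2 * l ≤ n + 2
      · rw [if_pos hc]
        obtain ⟨k, rfl⟩ : ∃ k, l = k + 1 := ⟨l - 1, by omega⟩
        simp only [Nat.add_sub_cancel, map_add, map_mul, toRF_X_pow]
        rw [(ih k).1, (ih k).2]
        by_cases hcase : 2 * (k + 1) ≤ n + 1
        · -- generic case
          rw [Bf_pos (n+2) k (by omega), Bf_pos (n+1) k (by omega)]
          rcases Nat.eq_zero_or_eq_succ_pred k with hk | hk
          · subst hk
            rw [show (0:ℕ)+1 = 1 from by omega]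
            rw [Bf_zero, Bf_zero]
            have s := step1 n
            rw [qbinom_zero, qbinom_zero]
            linear_combination -s
          · obtain ⟨k', rfl⟩ : ∃ k', k = k' + 1 := ⟨k - 1, hk⟩
            rw [show k'+1+1 = k'+2 from by omega]
            rw [Bf_pos (n+1) k' (by omega), Bf_pos n k' (by omega)]
            linear_combination -main_id' k' n (by omega)
        · -- diagonal case : 2*(k+1) = n+2
          have hdiag : n + 2 = 2 * (k + 1) := by omega
          rw [Bf_neg (n+1) (k+1) (by omega), Bf_pos (n+2) k (by omega)]
          rcases Nat.eq_zero_or_eq_succ_pred k with hk | hk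
          · subst hk
            obtain rfl : n = 0 := by omega
            rw [show (0:ℕ)+1 = 1 from by omega]
            rw [Bf_zero, Bf_zero]
            have s := step1 0
            rw [qbinom_one_one] at s
            rw [qbinom_zero]
            norm_num at s ⊢
            linear_combination -s
          · obtain ⟨k', rfl⟩ : ∃ k', k = k' + 1 := ⟨k - 1, hk⟩
            rw [show k'+1+1 = k'+2 from by omega]
            rw [Bf_pos (n+1) k' (by omega), Bf_pos n k' (by omega)]
            linear_combination -diag_id' k' n (by omega)
      · rw [if_neg hc]
        push_neg at hc
        by_cases hl : l = 0
        · subst hl; rw [Bf_zero, Bf_zero]; simp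
        · have h2 := hc (by omega : 1 ≤ l)
          rw [Bf_neg (n+2) l (by omega), Bf_neg (n+1) l (by omega)]
          simp


/-- For `2ℓ ≤ n`, the difference `[n choose ℓ]_q − [n choose ℓ−1]_q` (with the
convention `[n choose −1]_q = 0`) is a polynomial in `q` with non-negative integer
coefficients. -/
theorem qbinom_diff_nonneg_coeffs (n l : ℕ) (h : 2 * l ≤ n) :
    ∃ f : Polynomial ℕ,
      algebraMap (Polynomial ℚ) (RatFunc ℚ) (f.map (Nat.castRingHom ℚ)) =
        qbinom n l - (if l = 0 then 0 else qbinom n (l - 1)) := by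
  refine ⟨(ud (n+1)).1 l, ?_⟩
  have hk := (key n l).1
  simp only [toRF, RingHom.coe_comp, Function.comp_apply, Polynomial.coe_mapRingHom] at hk
  rw [hk, Bf, if_pos h]
end
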